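/- On each open subinterval (0,1/2) and (1/2,1), the traveling wave u(x,t) = u₀(x − t/36) (interpreted with periodic extension, at time t=0) satisfies pointwise the integrated Ostrovsky-Vakhnenko equation with γ = −1 and wave speed c = 1/36: for the profile, (u₀(x) − 1/36) u₀''(x) + (u₀'(x))² − u₀(x) = 0. -/

import Mathlib

noncomputable def peakonProfile (x : ℝ) : ℝ :=
  if x ≤ 1 / 2 then
    (1 / 6) * (x - 1 / 2) ^ 2 + (1 / 6) * (x - 1 / 2) + 1 / 36
  else
    (1 / 6) * (x - 1 / 2) ^ 2 - (1 / 6) * (x - 1 / 2) + 1 / 36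

private lemma eq_left : ∀ x ∈ {y : ℝ | y < 1 / 2}, peakonProfile x =
    (1 / 6) * (x - 1 / 2) ^ 2 + (1 / 6) * (x - 1 / 2) + 1 / 36 := by
  intro x hx
  simp only [Set.mem_setOf_eq] at hx
  unfold peakonProfile
  rw [if_pos hx.le]

private lemma eq_right : ∀ x ∈ {y : ℝ | 1 / 2 < y}, peakonProfile x =
    (1 / 6) * (x - 1 / 2) ^ 2 - (1 / 6) * (x - 1 / 2) + 1 / 36 := by
  intro x hx
  simp only [Set.mem_setOf_eq] at hx
  unfold peakonProfile
  rw [if_neg (not_le.mpr hx)]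

private lemma open_lt : IsOpen {y : ℝ | y < 1 / 2} := isOpen_Iio
private lemma open_gt : IsOpen {y : ℝ | 1 / 2 < y} := isOpen_Ioi

private lemma deriv_left : ∀ x ∈ {y : ℝ | y < 1 / 2},
    deriv peakonProfile x = (1 / 3) * (x - 1 / 2) + 1 / 6 := by
  intro x hx
  have h : peakonProfile =ᶠ[nhds x]
      (fun y => (1 / 6) * (y - 1 / 2) ^ 2 + (1 / 6) * (y - 1 / 2) + 1 / 36) :=
    Filter.eventuallyEq_of_mem (open_lt.mem_nhds hx) eq_left
  rw [h.deriv_eq]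
  have : HasDerivAt (fun y : ℝ => (1 / 6) * (y - 1 / 2) ^ 2 + (1 / 6) * (y - 1 / 2) + 1 / 36)
      ((1 / 3) * (x - 1 / 2) + 1 / 6) x := by
    have h1 : HasDerivAt (fun y : ℝ => y - 1 / 2) 1 x := (hasDerivAt_id x).sub_const _
    have h2 := ((h1.pow 2).const_mul (1 / 6 : ℝ)).add (h1.const_mul (1 / 6 : ℝ))
    have h3 := h2.add_const (1 / 36 : ℝ)
    refine h3.congr_deriv ?_
    norm_num
    ring
  exact this.deriv

private lemma deriv_right : ∀ x ∈ {y : ℝ | 1 / 2 < y},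
    deriv peakonProfile x = (1 / 3) * (x - 1 / 2) - 1 / 6 := by
  intro x hx
  have h : peakonProfile =ᶠ[nhds x]
      (fun y => (1 / 6) * (y - 1 / 2) ^ 2 - (1 / 6) * (y - 1 / 2) + 1 / 36) :=
    Filter.eventuallyEq_of_mem (open_gt.mem_nhds hx) eq_right
  rw [h.deriv_eq]
  have : HasDerivAt (fun y : ℝ => (1 / 6) * (y - 1 / 2) ^ 2 - (1 / 6) * (y - 1 / 2) + 1 / 36)
      ((1 / 3) * (x - 1 / 2) - 1 / 6) x := by
    have h1 : HasDerivAt (fun y : ℝ => y - 1 / 2) 1 x := (hasDerivAt_id x).sub_const _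
    have h2 := ((h1.pow 2).const_mul (1 / 6 : ℝ)).sub (h1.const_mul (1 / 6 : ℝ))
    have h3 := h2.add_const (1 / 36 : ℝ)
    refine h3.congr_deriv ?_
    norm_num
    ring
  exact this.deriv

private lemma deriv2_left : ∀ x ∈ {y : ℝ | y < 1 / 2},
    deriv (deriv peakonProfile) x = 1 / 3 := by
  intro x hx
  have h : deriv peakonProfile =ᶠ[nhds x]
      (fun y => (1 / 3) * (y - 1 / 2) + 1 / 6) :=
    Filter.eventuallyEq_of_mem (open_lt.mem_nhds hx) deriv_left
  rw [h.deriv_eq]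
  have : HasDerivAt (fun y : ℝ => (1 / 3) * (y - 1 / 2) + 1 / 6) (1 / 3) x := by
    have h1 : HasDerivAt (fun y : ℝ => y - 1 / 2) 1 x := (hasDerivAt_id x).sub_const _
    have h2 := (h1.const_mul (1 / 3 : ℝ)).add_const (1 / 6 : ℝ)
    refine h2.congr_deriv ?_
    ring
  exact this.deriv

private lemma deriv2_right : ∀ x ∈ {y : ℝ | 1 / 2 < y},
    deriv (deriv peakonProfile) x = 1 / 3 := by
  intro x hx
  have h : deriv peakonProfile =ᶠ[nhds x]
      (fun y => (1 / 3) * (y - 1 / 2) - 1 / 6) :=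
    Filter.eventuallyEq_of_mem (open_gt.mem_nhds hx) deriv_right
  rw [h.deriv_eq]
  have : HasDerivAt (fun y : ℝ => (1 / 3) * (y - 1 / 2) - 1 / 6) (1 / 3) x := by
    have h1 : HasDerivAt (fun y : ℝ => y - 1 / 2) 1 x := (hasDerivAt_id x).sub_const _
    have h2 := (h1.const_mul (1 / 3 : ℝ)).sub_const (1 / 6 : ℝ)
    refine h2.congr_deriv ?_
    ring
  exact this.deriv

/-- On each open smooth piece, the peakon profile satisfies the traveling-wave
form of the Ostrovsky-Vakhnenko equation with `γ = −1` and speed `c = 1/36`: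
`(u₀ − 1/36) u₀'' + (u₀')² − u₀ = 0`. -/
theorem peakon_traveling_wave :
    ∀ x ∈ Set.Ioo (0 : ℝ) (1 / 2) ∪ Set.Ioo (1 / 2 : ℝ) 1,
      (peakonProfile x - 1 / 36) * deriv (deriv peakonProfile) x
        + (deriv peakonProfile x) ^ 2 - peakonProfile x = 0 := by
  rintro x (hx | hx)
  · have h1 : x ∈ {y : ℝ | y < 1 / 2} := hx.2
    rw [eq_left x h1, deriv_left x h1, deriv2_left x h1]
    ring
  · have h1 : x ∈ {y : ℝ | 1 / 2 < y} := hx.1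
    rw [eq_right x h1, deriv_right x h1, deriv2_right x h1]
    ring
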